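/- arXiv:1305.1215 — 2 statements merged into one kernel-verified Lean document; each statement's English description precedes it below -/
import Mathlib

section
/- Let S = {(a,b) ∈ ℝ² | b²(1−a²) ≥ 0}. Then for every d ∈ ℕ, the polynomial x₁^d x₂ satisfies (x₁^d x₂)² ≤ x₂² at every point of S; hence x₁^d x₂ ∈ B₁(S) for all d, so B₁(S) is an infinite-dimensional vector space. -/
open MvPolynomial

def Bset (n d : ℕ) (S : Set (Fin n → ℝ)) : Set (MvPolynomial (Fin n) ℝ) :=
  {p | ∃ q : MvPolynomial (Fin n) ℝ, q.totalDegree ≤ 2 * d ∧ ∀ a ∈ S, (eval a p) ^ 2 ≤ eval a q}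

/-- `S = {(a,b) | b²(1-a²) ≥ 0}`. -/
def Sstrip : Set (Fin 2 → ℝ) := {a | 0 ≤ (a 1) ^ 2 * (1 - (a 0) ^ 2)}

/-! `x₁ᵈ x₂` is bounded on `S` by the degree-two polynomial `x₂²`, and these polynomials are
distinct monomials, hence linearly independent, for different `d`. -/

theorem pow_mul_sq_le_sq {x y : ℝ} (h : 0 ≤ y ^ 2 * (1 - x ^ 2)) (d : ℕ) :
    (x ^ d * y) ^ 2 ≤ y ^ 2 := by
  rcases eq_or_ne y 0 with rfl | hy
  · simp
  have hx : x ^ 2 ≤ 1 := sub_nonneg.1 ((mul_nonneg_iff_of_pos_left (by positivity)).1 h)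
  calc (x ^ d * y) ^ 2 = (x ^ 2) ^ d * y ^ 2 := by ring
    _ ≤ 1 * y ^ 2 := by gcongr; exact pow_le_one₀ (sq_nonneg x) hx
    _ = y ^ 2 := one_mul _

theorem MvPolynomial.linearIndependent_X_pow_mul_X {σ R : Type*} [CommSemiring R] (i j : σ) :
    LinearIndependent R fun d : ℕ => (X i ^ d * X j : MvPolynomial σ R) := by
  have hmon : (fun d : ℕ => (X i ^ d * X j : MvPolynomial σ R)) =
      basisMonomials σ R ∘ fun d => Finsupp.single i d + Finsupp.single j 1 := by
    funext d
    exact monomial_single_add.symm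
  rw [hmon]
  exact (basisMonomials σ R).linearIndependent.comp _
    ((add_left_injective _).comp (Finsupp.single_injective i))

theorem Submodule.not_finite_span_of_linearIndependent {R M ι : Type*} [Ring R]
    [StrongRankCondition R] [AddCommGroup M] [Module R M] [Infinite ι] {s : Set M} {v : ι → M}
    (hv : LinearIndependent R v) (hvs : ∀ i, v i ∈ s) : ¬Module.Finite R (span R s) := by
  intro _
  have hv' : LinearIndependent R fun i => (⟨v i, subset_span (hvs i)⟩ : span R s) :=
    .of_comp (span R s).subtype hv
  exact Module.Finite.not_linearIndependent_of_infinite _ hv'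

theorem X_pow_mul_X_mem_Bset_Sstrip (d : ℕ) :
    (X 0 ^ d * X 1 : MvPolynomial (Fin 2) ℝ) ∈ Bset 2 1 Sstrip := by
  refine ⟨X 1 ^ 2, ?_, fun a ha => ?_⟩
  · calc (X 1 ^ 2 : MvPolynomial (Fin 2) ℝ).totalDegree
        ≤ 2 * (X 1 : MvPolynomial (Fin 2) ℝ).totalDegree := totalDegree_pow _ 2
      _ = 2 * 1 := by rw [totalDegree_X]
  · simpa using pow_mul_sq_le_sq ha d

theorem strip_union_axis_B1_infinite :
    (∀ (d : ℕ) (a : Fin 2 → ℝ), a ∈ Sstrip → ((a 0) ^ d * a 1) ^ 2 ≤ (a 1) ^ 2) ∧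
    (∀ d : ℕ, (X 0 ^ d * X 1 : MvPolynomial (Fin 2) ℝ) ∈ Bset 2 1 Sstrip) ∧
    ¬ Module.Finite ℝ (Submodule.span ℝ (Bset 2 1 Sstrip)) :=
  ⟨fun d _ ha => pow_mul_sq_le_sq ha d, X_pow_mul_X_mem_Bset_Sstrip,
    Submodule.not_finite_span_of_linearIndependent (linearIndependent_X_pow_mul_X 0 1)
      X_pow_mul_X_mem_Bset_Sstrip⟩
end

section
/- Let S ⊆ ℝⁿ with ‖a‖ ≥ 1 for all a ∈ S, and S' := {(a,s) ∈ ℝ^{n+1} | a ∈ S, ‖a‖²s² ≤ 1}. If q(x,t) = ∑_{i=0}^d p_i(x) t^i is bounded on S', then for each i, there is D > 0 with |p_i(a)| ≤ D‖a‖^i for all a ∈ S; consequently p_i ∈ B_i(S). -/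
/-!
Substituting `s = r / ‖a‖` turns the bound on `S'` into the bound `C` for the polynomial
`r ↦ ∑ᵢ pᵢ(a) / ‖a‖ⁱ · rⁱ` on `[0, 1]`. For polynomials of degree `≤ d`, the values at `d + 1`
distinct nodes of `[0, 1]` control every coefficient (the Vandermonde matrix is invertible), so
`|pᵢ(a)| ≤ D ‖a‖ⁱ` with `D` independent of `a`. Squaring, `pᵢ² ≤ D² (∑ⱼ xⱼ²)ⁱ` on `S`, and the right
side has degree `2i`.
-/

open MvPolynomial Finset
open scoped Matrix

theorem exists_abs_coeff_le_of_abs_eval_nodes_le {m : ℕ} {x : Fin m → ℝ}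
    (hx : Function.Injective x) :
    ∃ D : ℝ, 0 ≤ D ∧ ∀ (c : Fin m → ℝ) (B : ℝ),
      (∀ j, |∑ i, c i * x j ^ (i : ℕ)| ≤ B) → ∀ i, |c i| ≤ D * B := by
  set A := Matrix.vandermonde x
  have hA : IsUnit A.det := (Matrix.det_vandermonde_ne_zero_iff.mpr hx).isUnit
  set L := LinearMap.toContinuousLinearMap (Matrix.toLin' A⁻¹)
  refine ⟨‖L‖, norm_nonneg L, fun c B hc i => ?_⟩
  have hAc : ∀ j, (A *ᵥ c) j = ∑ i, c i * x j ^ (i : ℕ) := fun j => by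
    simp only [Matrix.mulVec, dotProduct, A, Matrix.vandermonde_apply, mul_comm]
  have hB : 0 ≤ B := (abs_nonneg _).trans (hc i)
  have hnorm : ‖A *ᵥ c‖ ≤ B :=
    (pi_norm_le_iff_of_nonneg hB).mpr fun j => by rw [Real.norm_eq_abs, hAc]; exact hc j
  have hLc : L (A *ᵥ c) = c := by
    simp only [L, LinearMap.coe_toContinuousLinearMap', Matrix.toLin'_apply, Matrix.mulVec_mulVec,
      Matrix.nonsing_inv_mul A hA, Matrix.one_mulVec]
  calc |c i| = ‖L (A *ᵥ c) i‖ := by rw [hLc, Real.norm_eq_abs]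
    _ ≤ ‖L (A *ᵥ c)‖ := norm_le_pi_norm _ i
    _ ≤ ‖L‖ * ‖A *ᵥ c‖ := L.le_opNorm _
    _ ≤ ‖L‖ * B := by gcongr

theorem exists_abs_coeff_le_of_abs_le_on_Icc (d : ℕ) :
    ∃ D : ℝ, 0 ≤ D ∧ ∀ (c : ℕ → ℝ) (B : ℝ),
      (∀ r ∈ Set.Icc (0 : ℝ) 1, |∑ i ∈ range (d + 1), c i * r ^ i| ≤ B) →
        ∀ i ≤ d, |c i| ≤ D * B := by
  have hd : (0 : ℝ) < d + 1 := by positivity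
  set x : Fin (d + 1) → ℝ := fun j => (j : ℝ) / (d + 1)
  have hx : Function.Injective x := fun j k hjk => by
    simpa [x, div_left_inj' hd.ne', Fin.val_inj] using hjk
  have hx01 : ∀ j, x j ∈ Set.Icc (0 : ℝ) 1 := fun j =>
    ⟨by positivity, (div_le_one hd).mpr (by exact_mod_cast j.isLt.le)⟩
  obtain ⟨D, hD, hcoeff⟩ := exists_abs_coeff_le_of_abs_eval_nodes_le hx
  refine ⟨D, hD, fun c B hc i hi => ?_⟩
  refine hcoeff (fun k => c k) B (fun j => ?_) ⟨i, Nat.lt_succ_of_le hi⟩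
  rw [Fin.sum_univ_eq_sum_range (fun k => c k * x j ^ k)]
  exact hc _ (hx01 j)

theorem exists_abs_coeff_le_mul_pow_of_abs_le_on_Icc_inv (d : ℕ) :
    ∃ D : ℝ, 0 ≤ D ∧ ∀ (c : ℕ → ℝ) (B N : ℝ), 0 < N →
      (∀ s ∈ Set.Icc (0 : ℝ) N⁻¹, |∑ i ∈ range (d + 1), c i * s ^ i| ≤ B) →
        ∀ i ≤ d, |c i| ≤ D * B * N ^ i := by
  obtain ⟨D, hD, hcoeff⟩ := exists_abs_coeff_le_of_abs_le_on_Icc d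
  refine ⟨D, hD, fun c B N hN hc i hi => ?_⟩
  have hscaled : ∀ r ∈ Set.Icc (0 : ℝ) 1,
      |∑ k ∈ range (d + 1), c k / N ^ k * r ^ k| ≤ B := fun r hr => by
    have hs : r / N ∈ Set.Icc (0 : ℝ) N⁻¹ :=
      ⟨div_nonneg hr.1 hN.le,
        by rw [div_eq_mul_inv]; exact mul_le_of_le_one_left (by positivity) hr.2⟩
    convert hc (r / N) hs using 3 with k
    rw [div_pow]; ring
  have hNi : 0 < N ^ i := by positivity
  calc |c i| = |c i / N ^ i| * N ^ i := by
        rw [abs_div, abs_of_pos hNi, div_mul_cancel₀ _ hNi.ne']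
    _ ≤ D * B * N ^ i := by gcongr; exact hcoeff _ B hscaled i hi

theorem totalDegree_sum_X_sq_pow_le (n i : ℕ) :
    ((∑ j : Fin n, X j ^ 2 : MvPolynomial (Fin n) ℝ) ^ i).totalDegree ≤ 2 * i := by
  have hsum : (∑ j : Fin n, X j ^ 2 : MvPolynomial (Fin n) ℝ).totalDegree ≤ 2 :=
    (totalDegree_finsetSum _ _).trans (Finset.sup_le fun j _ => (totalDegree_X_pow j 2).le)
  calc _ ≤ i * (∑ j : Fin n, X j ^ 2 : MvPolynomial (Fin n) ℝ).totalDegree := totalDegree_pow _ _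
    _ ≤ 2 * i := by rw [mul_comm]; gcongr

theorem mem_Bset_of_abs_eval_le {n i : ℕ} {S : Set (Fin n → ℝ)} {p : MvPolynomial (Fin n) ℝ}
    {D : ℝ} (hp : ∀ a ∈ S, |eval a p| ≤ D * Real.sqrt (∑ j, a j ^ 2) ^ i) : p ∈ Bset n i S := by
  refine ⟨C (D ^ 2) * (∑ j, X j ^ 2) ^ i, ?_, fun a ha => ?_⟩
  · calc _ ≤ (C (D ^ 2) : MvPolynomial (Fin n) ℝ).totalDegree
          + ((∑ j : Fin n, X j ^ 2 : MvPolynomial (Fin n) ℝ) ^ i).totalDegree := totalDegree_mul _ _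
      _ ≤ 2 * i := by rw [totalDegree_C, zero_add]; exact totalDegree_sum_X_sq_pow_le n i
  · have hsq : Real.sqrt (∑ j, a j ^ 2) ^ 2 = ∑ j, a j ^ 2 := Real.sq_sqrt (by positivity)
    calc eval a p ^ 2 = |eval a p| ^ 2 := (sq_abs _).symm
      _ ≤ (D * Real.sqrt (∑ j, a j ^ 2) ^ i) ^ 2 := by gcongr; exact hp a ha
      _ = eval a (C (D ^ 2) * (∑ j, X j ^ 2) ^ i) := by
        rw [mul_pow, ← pow_mul, mul_comm i 2, pow_mul, hsq]
        simp only [map_mul, map_pow, map_sum, eval_C, eval_X]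

theorem bounded_on_S'_gives_Bi (n d : ℕ) (S : Set (Fin n → ℝ))
    (hS : ∀ a ∈ S, 1 ≤ ∑ j, (a j) ^ 2)
    (p : ℕ → MvPolynomial (Fin n) ℝ) (C : ℝ)
    (hq : ∀ a ∈ S, ∀ s : ℝ, (∑ j, (a j) ^ 2) * s ^ 2 ≤ 1 →
      |∑ i ∈ Finset.range (d + 1), eval a (p i) * s ^ i| ≤ C) :
    ∀ i ≤ d,
      (∃ D : ℝ, 0 < D ∧ ∀ a ∈ S,
        |eval a (p i)| ≤ D * (Real.sqrt (∑ j, (a j) ^ 2)) ^ i) ∧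
      p i ∈ Bset n i S := by
  intro i hi
  obtain ⟨D, hD, hcoeff⟩ := exists_abs_coeff_le_mul_pow_of_abs_le_on_Icc_inv d
  have hbound : ∀ a ∈ S, |eval a (p i)| ≤ (D * |C| + 1) * Real.sqrt (∑ j, a j ^ 2) ^ i := by
    intro a ha
    set N := Real.sqrt (∑ j, a j ^ 2)
    have hN : 0 < N := one_pos.trans_le (Real.one_le_sqrt.mpr (hS a ha))
    have hN2 : N ^ 2 = ∑ j, a j ^ 2 := Real.sq_sqrt (by positivity)
    have hqN : ∀ s ∈ Set.Icc (0 : ℝ) N⁻¹, |∑ k ∈ range (d + 1), eval a (p k) * s ^ k| ≤ C :=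
      fun s hs => hq a ha s <| by
        have hNs : N * s ≤ 1 :=
          (mul_le_mul_of_nonneg_left hs.2 hN.le).trans_eq (mul_inv_cancel₀ hN.ne')
        rw [← hN2, ← mul_pow]
        exact pow_le_one₀ (mul_nonneg hN.le hs.1) hNs
    calc |eval a (p i)| ≤ D * C * N ^ i := hcoeff _ C N hN hqN i hi
      _ ≤ (D * |C| + 1) * N ^ i := by
        gcongr
        nlinarith [le_abs_self C]
  exact ⟨⟨D * |C| + 1, by positivity, hbound⟩, mem_Bset_of_abs_eval_le hbound⟩
end
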